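/- arXiv:2208.02203 — 3 statements merged into one kernel-verified Lean document; each statement's English description precedes it below -/
import Mathlib

section
/- Let u_α(x) = (α^{3/2}/√(8π)) e^{-α|x|/2} be the ground state of the hydrogen atom Hamiltonian h_α = -Δ - α/|x| with ground state energy e_α = -α²/4. Then ⟨x u_α, (h_α - e_α)(x u_α)⟩ = 3, where x u_α denotes the vector-valued function x ↦ x·u_α(x) and the inner product sums over the three components. -/
/-! For `x ≠ 0` a direct computation along coordinate lines gives
`Δ(x_j u_α) = (α²/4 - 2α/|x|) x_j u_α`, so that `(h_α - e_α)(x_j u_α) = (α/|x|) x_j u_α`.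
Summing over `j`, the integrand becomes the radial function `α |x| u_α²`, and in polar coordinates
`∫ α |x| u_α² = α · α³/(8π) · 4π · ∫₀^∞ r³ e^{-αr} dr = α⁴/2 · 3!/α⁴ = 3`. -/

open Real MeasureTheory

noncomputable def groundState (α : ℝ) (x : EuclideanSpace ℝ (Fin 3)) : ℝ :=
  (α ^ ((3 : ℝ) / 2) / Real.sqrt (8 * π)) * Real.exp (-α * ‖x‖ / 2)

noncomputable def laplacian (f : EuclideanSpace ℝ (Fin 3) → ℝ)
    (x : EuclideanSpace ℝ (Fin 3)) : ℝ :=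
  ∑ i : Fin 3, iteratedDeriv 2 (fun t : ℝ => f (x + t • EuclideanSpace.single i (1 : ℝ))) 0

/-- The hydrogen Hamiltonian `h_α = -Δ - α/|x|` applied to a function, pointwise. -/
noncomputable def hydrogenOp (α : ℝ) (f : EuclideanSpace ℝ (Fin 3) → ℝ)
    (x : EuclideanSpace ℝ (Fin 3)) : ℝ :=
  -laplacian f x - (α / ‖x‖) * f x

open Topology

lemma hasDerivAt_sqrt_quadratic {a c t : ℝ} (h : 0 < t ^ 2 + 2 * a * t + c) :
    HasDerivAt (fun s => √(s ^ 2 + 2 * a * s + c)) ((t + a) / √(t ^ 2 + 2 * a * t + c)) t := by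
  have hq : HasDerivAt (fun s => s ^ 2 + 2 * a * s + c) (2 * t + 2 * a) t := by
    simpa using (((hasDerivAt_pow 2 t).add ((hasDerivAt_id t).const_mul (2 * a))).add_const c)
  convert hq.sqrt h.ne' using 1
  field_simp

lemma hasDerivAt_linear_mul_exp_sqrt {a b c δ k t : ℝ} (h : 0 < t ^ 2 + 2 * a * t + c) :
    HasDerivAt (fun s => (b + δ * s) * exp (-k * √(s ^ 2 + 2 * a * s + c)))
      ((δ - k * ((b + δ * t) * (t + a) / √(t ^ 2 + 2 * a * t + c))) *
        exp (-k * √(t ^ 2 + 2 * a * t + c))) t := by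
  have hlin : HasDerivAt (fun s => b + δ * s) δ t := by
    simpa using ((hasDerivAt_id t).const_mul δ).const_add b
  refine (hlin.fun_mul ((hasDerivAt_sqrt_quadratic h).const_mul (-k)).exp).congr_deriv ?_
  ring

lemma iteratedDeriv_two_linear_mul_exp_sqrt (a b δ k : ℝ) {r : ℝ} (hr : 0 < r) :
    iteratedDeriv 2 (fun s => (b + δ * s) * exp (-k * √(s ^ 2 + 2 * a * s + r ^ 2))) 0
      = (b * (k ^ 2 * a ^ 2 / r ^ 2 + k * a ^ 2 / r ^ 3 - k / r) - 2 * δ * k * a / r)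
        * exp (-k * r) := by
  have hq0 : (0 : ℝ) < 0 ^ 2 + 2 * a * 0 + r ^ 2 := by simpa using pow_pos hr 2
  have hρ0 : √((0 : ℝ) ^ 2 + 2 * a * 0 + r ^ 2) = r := by simpa using sqrt_sq hr.le
  have hderiv : deriv (fun s => (b + δ * s) * exp (-k * √(s ^ 2 + 2 * a * s + r ^ 2)))
      =ᶠ[𝓝 0] fun s => (δ - k * ((b + δ * s) * (s + a) / √(s ^ 2 + 2 * a * s + r ^ 2))) *
        exp (-k * √(s ^ 2 + 2 * a * s + r ^ 2)) := by
    have hcont : Continuous fun s : ℝ => s ^ 2 + 2 * a * s + r ^ 2 := by fun_prop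
    filter_upwards [(hcont.tendsto 0).eventually (lt_mem_nhds hq0)] with s hs
    exact (hasDerivAt_linear_mul_exp_sqrt hs).deriv
  have hnum : HasDerivAt (fun s => (b + δ * s) * (s + a)) (δ * a + b) 0 := by
    simpa using (((hasDerivAt_id (0:ℝ)).const_mul δ).const_add b).fun_mul
      ((hasDerivAt_id (0:ℝ)).add_const a)
  have hderiv_zero := (((hnum.fun_div (hasDerivAt_sqrt_quadratic hq0) (by rw [hρ0]; exact hr.ne'))
    |>.const_mul k).const_sub δ).fun_mul ((hasDerivAt_sqrt_quadratic hq0).const_mul (-k)).exp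
  rw [iteratedDeriv_succ, iteratedDeriv_one, hderiv.deriv_eq, hderiv_zero.deriv]
  simp only [hρ0]
  field_simp
  ring

lemma EuclideanSpace.norm_add_smul_single {ι : Type*} [Fintype ι] [DecidableEq ι]
    (x : EuclideanSpace ℝ ι) (i : ι) (t : ℝ) :
    ‖x + t • EuclideanSpace.single i 1‖ = √(t ^ 2 + 2 * x i * t + ‖x‖ ^ 2) := by
  rw [← sqrt_sq (norm_nonneg (x + _)), norm_add_sq_real, inner_smul_right,
    EuclideanSpace.inner_single_right, norm_smul, PiLp.norm_single]
  simp only [conj_trivial, norm_one, mul_one, one_mul, Real.norm_eq_abs, sq_abs]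
  ring_nf

lemma laplacian_coord_mul_groundState (α : ℝ) {x : EuclideanSpace ℝ (Fin 3)} (hx : x ≠ 0)
    (j : Fin 3) :
    laplacian (fun z => z j * groundState α z) x
      = (α ^ 2 / 4 - 2 * α / ‖x‖) * (x j * groundState α x) := by
  have hr : 0 < ‖x‖ := norm_pos_iff.2 hx
  have hline : ∀ i, (fun t : ℝ => (x + t • EuclideanSpace.single i (1 : ℝ)) j
        * groundState α (x + t • EuclideanSpace.single i 1))
      = fun s => α ^ ((3 : ℝ) / 2) / √(8 * π) * ((x j + (if i = j then 1 else 0) * s)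
        * exp (-(α / 2) * √(s ^ 2 + 2 * x i * s + ‖x‖ ^ 2))) := by
    intro i
    ext s
    simp only [groundState, EuclideanSpace.norm_add_smul_single, PiLp.add_apply,
      PiLp.smul_apply, PiLp.single_apply, smul_eq_mul, mul_ite, mul_one, mul_zero, eq_comm]
    split_ifs <;> ring_nf
  simp only [laplacian, hline, iteratedDeriv_const_mul_field,
    iteratedDeriv_two_linear_mul_exp_sqrt _ _ _ _ hr]
  calc _ = ∑ i, α ^ ((3 : ℝ) / 2) / √(8 * π) * exp (-(α / 2) * ‖x‖)
          * (((α / 2) ^ 2 / ‖x‖ ^ 2 + α / 2 / ‖x‖ ^ 3) * x j * x i ^ 2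
            - α / 2 / ‖x‖ * x j - 2 * (α / 2) / ‖x‖ * (if i = j then x i else 0)) :=
        Finset.sum_congr rfl fun i _ => by split_ifs <;> ring
    _ = _ := by
      simp only [← Finset.mul_sum, Finset.sum_sub_distrib, Finset.sum_ite_eq', Finset.mem_univ,
        if_true, ← EuclideanSpace.real_norm_sq_eq, Finset.sum_const, Finset.card_univ,
        Fintype.card_fin, nsmul_eq_mul, groundState]
      rw [show -α * ‖x‖ / 2 = -(α / 2) * ‖x‖ by ring]
      field_simp
      ring

lemma groundState_sq {α : ℝ} (hα : 0 ≤ α) (x : EuclideanSpace ℝ (Fin 3)) :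
    groundState α x ^ 2 = α ^ 3 / (8 * π) * exp (-α * ‖x‖) := by
  rw [groundState, mul_pow, div_pow, ← rpow_natCast (α ^ _), ← rpow_mul hα,
    sq_sqrt (by positivity), ← exp_nat_mul]
  norm_num
  ring_nf
  simp

@[fun_prop]
lemma continuous_groundState (α : ℝ) : Continuous (groundState α) := by
  unfold groundState; fun_prop

lemma norm_mul_groundState_sq_eq_radial {α : ℝ} (hα : 0 ≤ α) :
    (fun x : EuclideanSpace ℝ (Fin 3) => ‖x‖ * groundState α x ^ 2)
      = fun x => (fun y : ℝ => α ^ 3 / (8 * π) * (y * exp (-(α * y)))) ‖x‖ := by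
  ext x
  rw [groundState_sq hα]
  ring_nf

lemma integrable_norm_mul_groundState_sq {α : ℝ} (hα : 0 < α) :
    Integrable (fun x : EuclideanSpace ℝ (Fin 3) => ‖x‖ * groundState α x ^ 2) := by
  rw [norm_mul_groundState_sq_eq_radial hα.le, integrable_fun_norm_addHaar volume
    (f := fun y : ℝ => α ^ 3 / (8 * π) * (y * exp (-(α * y)))), finrank_euclideanSpace_fin]
  refine IntegrableOn.congr_fun (Integrable.const_mul (integrableOn_rpow_mul_exp_neg_mul_rpow
    (s := 3) (p := 1) (by norm_num) one_pos hα) (α ^ 3 / (8 * π))) (fun y _ => ?_)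
    measurableSet_Ioi
  norm_num
  ring

lemma integral_norm_mul_groundState_sq {α : ℝ} (hα : 0 < α) :
    ∫ x : EuclideanSpace ℝ (Fin 3), ‖x‖ * groundState α x ^ 2 = 3 / α := by
  have hrad : ∫ y in Set.Ioi (0 : ℝ), y ^ 2 * (α ^ 3 / (8 * π) * (y * exp (-(α * y))))
      = α ^ 3 / (8 * π) * ((1 / α) ^ (4 : ℝ) * Gamma 4) := by
    rw [← integral_rpow_mul_exp_neg_mul_Ioi (by norm_num) hα, ← integral_const_mul]
    refine setIntegral_congr_fun measurableSet_Ioi fun y _ => ?_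
    norm_num
    ring
  have hGamma : Gamma 4 = 6 := by
    rw [show (4 : ℝ) = (3 : ℕ) + 1 by norm_num, Gamma_nat_eq_factorial]; rfl
  rw [norm_mul_groundState_sq_eq_radial hα.le, integral_fun_norm_addHaar volume
    (fun y : ℝ => α ^ 3 / (8 * π) * (y * exp (-(α * y)))), finrank_euclideanSpace_fin,
    measureReal_def, EuclideanSpace.volume_ball_fin_three]
  simp only [smul_eq_mul, nsmul_eq_mul]
  norm_num [hrad, hGamma]
  rw [ENNReal.toReal_ofReal (by positivity)]
  field_simp
  ring

lemma hydrogenOp_coord_mul_groundState (α : ℝ) {x : EuclideanSpace ℝ (Fin 3)} (hx : x ≠ 0)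
    (j : Fin 3) :
    hydrogenOp α (fun z => z j * groundState α z) x
      = (-(α ^ 2) / 4 + α / ‖x‖) * (x j * groundState α x) := by
  rw [hydrogenOp, laplacian_coord_mul_groundState α hx]
  ring

lemma EuclideanSpace.sum_sq_div_norm {ι : Type*} [Fintype ι] (x : EuclideanSpace ℝ ι) :
    ∑ j, x j ^ 2 / ‖x‖ = ‖x‖ := by
  rw [← Finset.sum_div, ← EuclideanSpace.real_norm_sq_eq, sq, mul_self_div_self]

lemma EuclideanSpace.sq_apply_div_norm_le {ι : Type*} [Fintype ι] (x : EuclideanSpace ℝ ι)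
    (j : ι) :
    x j ^ 2 / ‖x‖ ≤ ‖x‖ :=
  (Finset.single_le_sum (f := fun i => x i ^ 2 / ‖x‖) (fun _ _ => by positivity)
    (Finset.mem_univ j)).trans_eq x.sum_sq_div_norm

lemma integrable_sq_apply_div_norm_mul_groundState_sq {α : ℝ} (hα : 0 < α) (j : Fin 3) :
    Integrable fun x : EuclideanSpace ℝ (Fin 3) => x j ^ 2 / ‖x‖ * groundState α x ^ 2 :=
  (integrable_norm_mul_groundState_sq hα).mono' (Measurable.aestronglyMeasurable (by fun_prop))
    (.of_forall fun x => by
      rw [norm_of_nonneg (by positivity)]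
      gcongr
      exact x.sq_apply_div_norm_le j)

/-- `⟨x u_α, (h_α - e_α)(x u_α)⟩ = 3`, summing over the three components. -/
theorem inner_xu_h_sub_e_xu (α : ℝ) (hα : 0 < α) :
    ∑ j : Fin 3, ∫ x : EuclideanSpace ℝ (Fin 3),
      (x j * groundState α x) *
        (hydrogenOp α (fun z => z j * groundState α z) x
          - (-(α ^ 2) / 4) * (x j * groundState α x)) = 3 := by
  have hae : ∀ j : Fin 3, (fun x : EuclideanSpace ℝ (Fin 3) => (x j * groundState α x) *
        (hydrogenOp α (fun z => z j * groundState α z) x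
          - (-(α ^ 2) / 4) * (x j * groundState α x)))
      =ᵐ[volume] fun x => α * (x j ^ 2 / ‖x‖ * groundState α x ^ 2) := by
    intro j
    filter_upwards [compl_mem_ae_iff.2 (measure_singleton 0)] with x hx
    rw [hydrogenOp_coord_mul_groundState α hx]
    ring
  calc _ = ∑ j : Fin 3,
          ∫ x : EuclideanSpace ℝ (Fin 3), α * (x j ^ 2 / ‖x‖ * groundState α x ^ 2) :=
        Finset.sum_congr rfl fun j _ => integral_congr_ae (hae j)
    _ = ∫ x : EuclideanSpace ℝ (Fin 3), α * (‖x‖ * groundState α x ^ 2) := by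
        rw [← integral_finsetSum _ fun j _ =>
          (integrable_sq_apply_div_norm_mul_groundState_sq hα j).const_mul α]
        simp only [← Finset.mul_sum, ← Finset.sum_mul, EuclideanSpace.sum_sq_div_norm]
    _ = 3 := by
        rw [integral_const_mul, integral_norm_mul_groundState_sq hα]
        field_simp
end

section
/- Let h₁ = -Δ - 1/|x| with ground state u₁ and ground state energy e₁ = -1/4, and assume the spectral gap bound h₁ - e₁ ≥ 3/16 on the orthogonal complement of u₁ (equivalently, on x u₁ since x u₁ ⊥ u₁). Then the quantity ℵ_{α,L} = (1/(6π)) ⟨x u₁, α L arctan(1/(α L (h₁ − e₁))) x u₁⟩ satisfies: (i) if L ≥ (16/3) α^{-1}, then ℵ_{α,L} = (1/(6π)) ‖(h₁ − e₁)^{-1/2} x u₁‖² + O(1/(α²L²)); (ii) if 1 < L ≤ 16/3, then ℵ_{α,L} = α L + O(α² L). -/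
open Real MeasureTheory

/-!
Read `μ` as the spectral measure of `h₁ − e₁` in the state `x u₁`; then, with `s = αL`,
`ℵ_{α,L} = (1/(6π)) ∫ s arctan (1/(s l)) dμ(l)`.

For large `s`, the bounds `x − x³/3 ≤ arctan x ≤ x` at `x = 1/(s l)` make the integrand
`l⁻¹ + O(s⁻² l⁻³)`, uniformly on the support `l ≥ 3/16`. For bounded `s`, write
`arctan (1/(s l)) = π/2 − arctan (s l)` with `0 ≤ arctan (s l) ≤ s l`: the integral is
`6π s − O(s² ∫ l dμ)`, and the first moment is `3`.
-/

namespace Real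

theorem arctan_le_self {x : ℝ} (hx : 0 ≤ x) : arctan x ≤ x := by
  simpa only [tan_arctan] using le_tan (arctan_nonneg.2 hx) (arctan_lt_pi_div_two x)

theorem sub_pow_three_div_three_le_arctan {x : ℝ} (hx : 0 ≤ x) : x - x ^ 3 / 3 ≤ arctan x := by
  have hcont : Continuous fun t : ℝ => (1 + t ^ 2)⁻¹ :=
    (continuous_const.add (continuous_pow 2)).inv₀ fun t => (by positivity : (1 + t ^ 2) ≠ 0)
  have h : ∫ t in (0 : ℝ)..x, (1 - t ^ 2) ≤ ∫ t in (0 : ℝ)..x, (1 + t ^ 2)⁻¹ := by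
    refine intervalIntegral.integral_mono_on hx
      ((by fun_prop : Continuous fun t : ℝ => 1 - t ^ 2).intervalIntegrable _ _)
      (hcont.intervalIntegrable _ _) fun t _ => ?_
    rw [← one_div, le_div_iff₀ (by positivity)]
    nlinarith [pow_nonneg (sq_nonneg t) 2]
  rw [intervalIntegral.integral_sub (by simp) (by simp), integral_pow, integral_inv_one_add_sq] at h
  norm_num at h
  linarith

theorem abs_mul_arctan_one_div_mul_sub_inv_le {s l : ℝ} (hs : 0 < s) (hl : 0 < l) :
    |s * arctan (1 / (s * l)) - l⁻¹| ≤ 1 / (3 * s ^ 2 * l ^ 3) := by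
  have hx : 0 ≤ 1 / (s * l) := by positivity
  have hlin : s * (1 / (s * l)) = l⁻¹ := by field_simp
  have hcub : s * ((1 / (s * l)) ^ 3 / 3) = 1 / (3 * s ^ 2 * l ^ 3) := by field_simp
  have hup := mul_le_mul_of_nonneg_left (arctan_le_self hx) hs.le
  have hlow := mul_le_mul_of_nonneg_left (sub_pow_three_div_three_le_arctan hx) hs.le
  rw [mul_sub] at hlow
  rw [abs_le]
  constructor <;> linarith

end Real

section SpectralMeasure

variable {μ : Measure ℝ} [IsFiniteMeasure μ]

theorem integrable_mul_arctan_one_div_mul (s : ℝ) :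
    Integrable (fun l => s * arctan (1 / (s * l))) μ := by
  refine .of_bound ((measurable_arctan.comp (by fun_prop)).const_mul s).aestronglyMeasurable
    (|s| * (π / 2)) (.of_forall fun l => ?_)
  rw [norm_mul, Real.norm_eq_abs]
  gcongr
  exact abs_le.2 ⟨(neg_pi_div_two_lt_arctan _).le, (arctan_lt_pi_div_two _).le⟩

theorem abs_integral_mul_arctan_one_div_mul_sub_integral_inv_le {a s : ℝ} (ha : 0 < a)
    (hsupp : ∀ᵐ l ∂μ, a ≤ l) (hs : 0 < s) :
    |∫ l, s * arctan (1 / (s * l)) ∂μ - ∫ l, l⁻¹ ∂μ| ≤ μ.real Set.univ / (3 * s ^ 2 * a ^ 3) := by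
  have hinv : Integrable (fun l : ℝ => l⁻¹) μ := by
    refine .of_bound measurable_inv.aestronglyMeasurable a⁻¹ (hsupp.mono fun l hl => ?_)
    rw [norm_inv, Real.norm_of_nonneg (ha.le.trans hl)]
    exact inv_anti₀ ha hl
  have hpt : ∀ᵐ l ∂μ, ‖s * arctan (1 / (s * l)) - l⁻¹‖ ≤ 1 / (3 * s ^ 2 * a ^ 3) :=
    hsupp.mono fun l hl => (abs_mul_arctan_one_div_mul_sub_inv_le hs (ha.trans_le hl)).trans
      (by gcongr)
  rw [← integral_sub (integrable_mul_arctan_one_div_mul s) hinv, ← Real.norm_eq_abs]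
  simpa [div_eq_mul_inv, mul_comm] using norm_integral_le_of_norm_le_const hpt

theorem abs_integral_mul_arctan_one_div_mul_sub_le {s : ℝ} (hsupp : ∀ᵐ l ∂μ, 0 < l)
    (hint : Integrable id μ) (hs : 0 < s) :
    |∫ l, s * arctan (1 / (s * l)) ∂μ - s * (π / 2) * μ.real Set.univ| ≤ s ^ 2 * ∫ l, l ∂μ := by
  have harctan : Integrable (fun l => arctan (s * l)) μ :=
    .of_bound (measurable_arctan.comp (by fun_prop)).aestronglyMeasurable (π / 2)
      (.of_forall fun l => abs_le.2 ⟨(neg_pi_div_two_lt_arctan _).le, (arctan_lt_pi_div_two _).le⟩)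
  have hcompl : ∫ l, s * arctan (1 / (s * l)) ∂μ
      = s * (π / 2) * μ.real Set.univ - s * ∫ l, arctan (s * l) ∂μ := calc
    _ = ∫ l, (s * (π / 2) - s * arctan (s * l)) ∂μ := integral_congr_ae <| hsupp.mono fun l hl => by
      rw [one_div, arctan_inv_of_pos (mul_pos hs hl), mul_sub]
    _ = _ := by
      rw [integral_sub (integrable_const _) (harctan.const_mul s), integral_const,
        integral_const_mul, smul_eq_mul, mul_comm (μ.real _)]
  have hnonneg : 0 ≤ ∫ l, arctan (s * l) ∂μ :=
    integral_nonneg_of_ae (hsupp.mono fun l hl => arctan_nonneg.2 (mul_pos hs hl).le)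
  have hle : ∫ l, arctan (s * l) ∂μ ≤ s * ∫ l, l ∂μ := by
    rw [← integral_const_mul]
    exact integral_mono_ae harctan (hint.const_mul s)
      (hsupp.mono fun l hl => arctan_le_self (mul_pos hs hl).le)
  rw [hcompl, sub_sub_cancel_left, abs_neg, abs_of_nonneg (mul_nonneg hs.le hnonneg), sq, mul_assoc]
  exact mul_le_mul_of_nonneg_left hle hs.le

end SpectralMeasure

/-- Asymptotics of `ℵ_{α,L} = (1/(6π)) ⟨x u₁, αL arctan(1/(αL(h₁−e₁))) x u₁⟩`, stated via
the spectral theorem: `μ` is the spectral measure of `h₁ − e₁` in the state `x u₁`, a finite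
measure supported in `[3/16, ∞)` with total mass `‖x u₁‖² = 12` and first moment
`⟨x u₁, (h₁−e₁) x u₁⟩ = 3`. Then:
(i) if `L ≥ (16/3)α⁻¹`, `ℵ_{α,L} = (1/(6π)) ‖(h₁−e₁)^{-1/2} x u₁‖² + O(1/(α²L²))`;
(ii) if `1 < L ≤ 16/3`, `ℵ_{α,L} = αL + O(α²L)`. -/
theorem aleph_asymptotics (μ : Measure ℝ) [IsFiniteMeasure μ]
    (hsupp : ∀ᵐ l ∂μ, (3 : ℝ) / 16 ≤ l)
    (hmass : (μ Set.univ).toReal = 12)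
    (hint : Integrable id μ)
    (hmom : ∫ l, l ∂μ = 3) :
    ∃ C > (0 : ℝ), ∀ α L : ℝ, 0 < α → α < 1 →
      ((16 / 3) * α⁻¹ ≤ L →
        |(1 / (6 * π)) * (∫ l, α * L * Real.arctan (1 / (α * L * l)) ∂μ)
            - (1 / (6 * π)) * ∫ l, l⁻¹ ∂μ| ≤ C / (α ^ 2 * L ^ 2)) ∧
      (1 < L → L ≤ 16 / 3 →
        |(1 / (6 * π)) * (∫ l, α * L * Real.arctan (1 / (α * L * l)) ∂μ)
            - α * L| ≤ C * α ^ 2 * L) := by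
  have hmass' : μ.real Set.univ = 12 := hmass
  have hπ : 3 < π := pi_gt_three
  refine ⟨34, by norm_num, fun α L hα _ => ⟨fun hL => ?_, fun hL1 hL16 => ?_⟩⟩
  · have hαL : 0 < α * L := mul_pos hα ((by positivity : 0 < 16 / 3 * α⁻¹).trans_le hL)
    have h := abs_integral_mul_arctan_one_div_mul_sub_integral_inv_le (by norm_num) hsupp hαL
    rw [hmass'] at h
    rw [← mul_sub, abs_mul, abs_of_pos (by positivity : 0 < 1 / (6 * π))]
    calc 1 / (6 * π) * |∫ l, α * L * arctan (1 / (α * L * l)) ∂μ - ∫ l, l⁻¹ ∂μ|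
        ≤ 1 / (6 * π) * (12 / (3 * (α * L) ^ 2 * (3 / 16) ^ 3)) := by gcongr
      _ = 16384 / (162 * π) / (α ^ 2 * L ^ 2) := by field_simp; ring
      _ ≤ 34 / (α ^ 2 * L ^ 2) := by
        gcongr
        rw [div_le_iff₀ (by positivity)]
        linarith
  · have hαL : 0 < α * L := mul_pos hα (by linarith)
    have h := abs_integral_mul_arctan_one_div_mul_sub_le
      (hsupp.mono fun l hl => by linarith) hint hαL
    rw [hmass', hmom] at h
    have hrw : 1 / (6 * π) * ∫ l, α * L * arctan (1 / (α * L * l)) ∂μ - α * L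
        = (∫ l, α * L * arctan (1 / (α * L * l)) ∂μ - α * L * (π / 2) * 12) / (6 * π) := by
      field_simp; ring
    rw [hrw, abs_div, abs_of_pos (by positivity : (0 : ℝ) < 6 * π), div_le_iff₀ (by positivity)]
    calc _ ≤ (α * L) ^ 2 * 3 := h
      _ ≤ 34 * α ^ 2 * L * (6 * π) := by
        nlinarith [mul_pos (mul_pos hα hα) (by linarith : (0 : ℝ) < L)]
end

section
/- Let λ_y ∈ L²(ℝ⁺×ℝ²; ℂ²) be given componentwise by λ_{y,γ}(k) = 2 χ_Λ(k)/(√2 π |k|^{1/2}) · (e_γ^{(1)}(k) cos(k₁y), −e_γ^{(2)}(k) sin(k₁y), −e_γ^{(3)}(k) sin(k₁y)) (a ℂ³-valued density, with the ℂ² index γ = 1,2), and λ_∞,γ(k) = χ_Λ(k)/(√2 π |k|^{1/2}) e_γ(k) on ℝ³. Then ‖λ_y‖² − ‖λ_∞‖² = ∫_{ℝ³} f_y(k) dk, where f_y(k) = (1/(2π²)) (χ_Λ(k)²/|k|) (−1 − k̂₁² + k̂₂² + k̂₃²) cos(2k₁y), with k̂ = k/|k|. -/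
/-!
Summing over the two polarizations, the completeness relation `e₀ⱼ² + e₁ⱼ² = 1 - k̂ⱼ²`
(Parseval's identity for the orthonormal frame `(k̂, e₀, e₁)`) together with
`cos² θ = (1 + cos 2θ) / 2` and `sin² θ = (1 - cos 2θ) / 2` turns `|λ_{y,1}|² + |λ_{y,2}|²` into
`4 w + 2 f_y` with `w = χ² / (2π² |k|)`, while `|λ_{∞,γ}|² = w`. Since `χ` is radial, `w` and `f_y`
are even in `k₁`, so their integrals over `ℝ³` are twice those over the half-space `{k₁ > 0}`, and
the `w` terms cancel. Everything is integrable because `|k|⁻¹` is locally integrable in dimension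
three and `χ` is continuous with compact support.
-/

open Real MeasureTheory
open scoped RealInnerProductSpace

section Integrability

variable {E : Type*} [NormedAddCommGroup E] [NormedSpace ℝ E] [FiniteDimensional ℝ E]
  [MeasurableSpace E] [BorelSpace E] {μ : Measure E} [μ.IsAddHaarMeasure]

theorem locallyIntegrable_inv_norm (hd : 1 < Module.finrank ℝ E) :
    LocallyIntegrable (fun x : E => ‖x‖⁻¹) μ :=
  locallyIntegrable_of_norm_le_rpow (C := 1) (α := 1) hd.le (by exact_mod_cast hd)
    (Filter.Eventually.of_forall fun x => by simp [Real.rpow_neg_one])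
    measurable_norm.inv.aestronglyMeasurable

theorem Continuous.integrable_div_mul_norm_of_hasCompactSupport (hd : 1 < Module.finrank ℝ E)
    {f : E → ℝ} (hf : Continuous f) (hfc : HasCompactSupport f) (c : ℝ) :
    Integrable (fun x => f x / (c * ‖x‖)) μ := by
  have h : HasCompactSupport fun x => c⁻¹ * f x := hfc.comp_left (g := (c⁻¹ * ·)) (mul_zero _)
  refine ((locallyIntegrable_inv_norm hd).integrable_smul_left_of_hasCompactSupport
    (continuous_const.mul hf) h).congr (Filter.Eventually.of_forall fun x => ?_)
  simp only [smul_eq_mul, Pi.mul_apply]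
  ring

end Integrability

namespace EuclideanSpace

variable {ι : Type*} [Fintype ι]

theorem volume_setOf_apply_eq_zero (i : ι) : volume {x : EuclideanSpace ℝ ι | x i = 0} = 0 := by
  classical
  have hker : {x : EuclideanSpace ℝ ι | x i = 0} = LinearMap.ker (projₗ (𝕜 := ℝ) i) := by
    ext x; simp
  rw [hker]
  refine Measure.addHaar_submodule _ _ fun htop => ?_
  have : single i (1 : ℝ) ∈ LinearMap.ker (projₗ (𝕜 := ℝ) i) := htop ▸ Submodule.mem_top
  simp at this

theorem sum_sq_apply_div_norm {x : EuclideanSpace ℝ ι} (hx : x ≠ 0) : ∑ i, (x i / ‖x‖) ^ 2 = 1 := by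
  have hx' : ‖x‖ ≠ 0 := norm_ne_zero_iff.mpr hx
  simp_rw [div_pow]
  rw [← Finset.sum_div, ← real_norm_sq_eq, div_self (pow_ne_zero 2 hx')]

theorem sq_apply_div_norm_le_one (x : EuclideanSpace ℝ ι) (i : ι) : (x i / ‖x‖) ^ 2 ≤ 1 := by
  rw [div_pow]
  refine div_le_one_of_le₀ ?_ (sq_nonneg _)
  simpa [sq_abs] using pow_le_pow_left₀ (norm_nonneg _) (PiLp.norm_apply_le x i) 2

variable [DecidableEq ι]

noncomputable def reflectCoord (i : ι) : EuclideanSpace ℝ ι ≃ₗᵢ[ℝ] EuclideanSpace ℝ ι :=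
  LinearIsometryEquiv.piLpCongrRight 2
    fun j => if j = i then LinearIsometryEquiv.neg ℝ else LinearIsometryEquiv.refl ℝ ℝ

@[simp] theorem reflectCoord_apply_self (i : ι) (x : EuclideanSpace ℝ ι) :
    reflectCoord i x i = -x i := by
  simp [reflectCoord, LinearIsometryEquiv.piLpCongrRight_apply]

theorem reflectCoord_apply_of_ne {i j : ι} (h : j ≠ i) (x : EuclideanSpace ℝ ι) :
    reflectCoord i x j = x j := by
  simp [reflectCoord, LinearIsometryEquiv.piLpCongrRight_apply, h]

theorem integral_eq_two_mul_setIntegral_apply_pos {g : EuclideanSpace ℝ ι → ℝ} (hg : Integrable g)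
    (i : ι) (hg_even : ∀ x, g (reflectCoord i x) = g x) :
    ∫ x, g x = 2 * ∫ x in {x | 0 < x i}, g x := by
  have hmeas : MeasurableSet {x : EuclideanSpace ℝ ι | 0 < x i} :=
    measurableSet_lt measurable_const (proj i).continuous.measurable
  have hpre : reflectCoord i ⁻¹' {x | 0 < x i}ᶜ = {x | 0 ≤ x i} := by
    ext x; simp
  have h_refl : ∫ x in {x | 0 ≤ x i}, g x = ∫ x in {x | 0 < x i}ᶜ, g x := by
    simpa only [hpre, hg_even] using (reflectCoord i).measurePreserving.setIntegral_preimage_emb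
      (reflectCoord i).toHomeomorph.measurableEmbedding g {x | 0 < x i}ᶜ
  have h_null : ∫ x in {x | 0 ≤ x i}, g x = ∫ x in {x | 0 < x i}, g x := by
    refine setIntegral_congr_set (Filter.eventuallyEq_set.mpr ?_)
    filter_upwards [measure_eq_zero_iff_ae_notMem.mp (volume_setOf_apply_eq_zero i)] with x hx
    exact ⟨fun h => h.lt_of_ne (Ne.symm hx), le_of_lt⟩
  linarith [integral_add_compl hmeas hg]

end EuclideanSpace

theorem Orthonormal.sum_sq_apply {ι : Type*} [Fintype ι] {v : ι → EuclideanSpace ℝ ι}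
    (hv : Orthonormal ℝ v) (j : ι) : ∑ i, v i j ^ 2 = 1 := by
  classical
  let b := OrthonormalBasis.mk hv
    (hv.linearIndependent.span_eq_top_of_card_eq_finrank' (by simp)).ge
  simpa [b, EuclideanSpace.inner_single_right] using
    b.sum_sq_inner_right (EuclideanSpace.single j 1)

section Polarization

variable {E : Type*} [NormedAddCommGroup E] [InnerProductSpace ℝ E]

def IsPolarization (k e₀ e₁ : E) : Prop :=
  ‖e₀‖ = 1 ∧ ‖e₁‖ = 1 ∧ ⟪e₀, e₁⟫ = 0 ∧ ⟪k, e₀⟫ = 0 ∧ ⟪k, e₁⟫ = 0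

theorem IsPolarization.orthonormal {k e₀ e₁ : E} (h : IsPolarization k e₀ e₁) (hk : k ≠ 0) :
    Orthonormal ℝ ![‖k‖⁻¹ • k, e₀, e₁] := by
  obtain ⟨h₀, h₁, h₀₁, hk₀, hk₁⟩ := h
  rw [orthonormal_iff_ite]
  intro i j
  fin_cases i <;> fin_cases j <;>
    simp [real_inner_smul_right, real_inner_comm, norm_smul,
      inv_mul_cancel₀ (norm_ne_zero_iff.mpr hk), h₀, h₁, h₀₁, hk₀, hk₁]

theorem IsPolarization.norm_eq_one {k : E} {e : Fin 2 → E} (h : IsPolarization k (e 0) (e 1))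
    (γ : Fin 2) : ‖e γ‖ = 1 := by
  fin_cases γ
  exacts [h.1, h.2.1]

end Polarization

local notation "ℝ³" => EuclideanSpace ℝ (Fin 3)

theorem IsPolarization.sq_add_sq_apply {k e₀ e₁ : ℝ³} (h : IsPolarization k e₀ e₁) (hk : k ≠ 0)
    (j : Fin 3) : e₀ j ^ 2 + e₁ j ^ 2 = 1 - (k j / ‖k‖) ^ 2 := by
  have h := (h.orthonormal hk).sum_sq_apply j
  simp only [Fin.sum_univ_three, Matrix.cons_val, PiLp.smul_apply, smul_eq_mul] at h
  linear_combination h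

noncomputable def anisotropy (k : ℝ³) : ℝ :=
  -1 - (k 0 / ‖k‖) ^ 2 + (k 1 / ‖k‖) ^ 2 + (k 2 / ‖k‖) ^ 2

theorem measurable_anisotropy : Measurable anisotropy := by
  unfold anisotropy
  fun_prop

theorem abs_anisotropy_le (k : ℝ³) : |anisotropy k| ≤ 3 := by
  have h := EuclideanSpace.sq_apply_div_norm_le_one k
  rw [anisotropy, abs_le]
  constructor <;> nlinarith [h 0, h 1, h 2, sq_nonneg (k 0 / ‖k‖), sq_nonneg (k 1 / ‖k‖),
    sq_nonneg (k 2 / ‖k‖)]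

theorem anisotropy_reflectCoord_zero (k : ℝ³) :
    anisotropy (EuclideanSpace.reflectCoord 0 k) = anisotropy k := by
  simp only [anisotropy, LinearIsometryEquiv.norm_map, EuclideanSpace.reflectCoord_apply_self,
    EuclideanSpace.reflectCoord_apply_of_ne (by decide : (1 : Fin 3) ≠ 0),
    EuclideanSpace.reflectCoord_apply_of_ne (by decide : (2 : Fin 3) ≠ 0), neg_div, neg_sq]

theorem IsPolarization.sq_mul_cos_sq_add_sq_mul_sin_sq {k e₀ e₁ : ℝ³}
    (h : IsPolarization k e₀ e₁) (hk : k ≠ 0) (θ : ℝ) :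
    (e₀ 0 ^ 2 * cos θ ^ 2 + (e₀ 1 ^ 2 + e₀ 2 ^ 2) * sin θ ^ 2) +
      (e₁ 0 ^ 2 * cos θ ^ 2 + (e₁ 1 ^ 2 + e₁ 2 ^ 2) * sin θ ^ 2) =
      1 + anisotropy k / 2 * cos (2 * θ) := by
  have hc := h.sq_add_sq_apply hk
  have hs := EuclideanSpace.sum_sq_apply_div_norm hk
  rw [Fin.sum_univ_three] at hs
  rw [anisotropy, cos_two_mul, sin_sq]
  linear_combination cos θ ^ 2 * hc 0 + (1 - cos θ ^ 2) * (hc 1 + hc 2) - (1 / 2) * hs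

theorem abs_sq_mul_cos_sq_add_sq_mul_sin_sq_le (v : ℝ³) (θ : ℝ) :
    |v 0 ^ 2 * cos θ ^ 2 + (v 1 ^ 2 + v 2 ^ 2) * sin θ ^ 2| ≤ ‖v‖ ^ 2 := by
  rw [abs_of_nonneg (by positivity), EuclideanSpace.real_norm_sq_eq, Fin.sum_univ_three]
  nlinarith [cos_sq_le_one θ, sin_sq_le_one θ, sq_nonneg (v 0), sq_nonneg (v 1), sq_nonneg (v 2)]

section Densities

variable {χ : ℝ³ → ℝ} {e : Fin 2 → ℝ³ → ℝ³} {y : ℝ}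

noncomputable def radialWeight (χ : ℝ³ → ℝ) (k : ℝ³) : ℝ := χ k ^ 2 / (2 * π ^ 2 * ‖k‖)

/-- `|λ_{y,γ}(k)|²`. -/
noncomputable def normSqLambdaY (χ : ℝ³ → ℝ) (e : Fin 2 → ℝ³ → ℝ³) (y : ℝ) (γ : Fin 2) (k : ℝ³) :
    ℝ :=
  4 * χ k ^ 2 / (2 * π ^ 2 * ‖k‖) *
    (e γ k 0 ^ 2 * cos (k 0 * y) ^ 2 + (e γ k 1 ^ 2 + e γ k 2 ^ 2) * sin (k 0 * y) ^ 2)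

/-- `|λ_{∞,γ}(k)|²`. -/
noncomputable def normSqLambdaInf (χ : ℝ³ → ℝ) (e : Fin 2 → ℝ³ → ℝ³) (γ : Fin 2) (k : ℝ³) : ℝ :=
  radialWeight χ k * ‖e γ k‖ ^ 2

noncomputable def fY (χ : ℝ³ → ℝ) (y : ℝ) (k : ℝ³) : ℝ :=
  1 / (2 * π ^ 2) * (χ k ^ 2 / ‖k‖) * anisotropy k * cos (2 * k 0 * y)

theorem integrable_radialWeight (hχc : Continuous χ) (hχ : HasCompactSupport χ) :
    Integrable (radialWeight χ) := by
  have hχ2 : HasCompactSupport fun k => χ k ^ 2 := hχ.comp_left (g := fun t : ℝ => t ^ 2) (by simp)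
  exact (hχc.pow 2).integrable_div_mul_norm_of_hasCompactSupport (by simp) hχ2 _

theorem radialWeight_map (hχrad : ∀ k k' : ℝ³, ‖k‖ = ‖k'‖ → χ k = χ k') (L : ℝ³ ≃ₗᵢ[ℝ] ℝ³)
    (k : ℝ³) : radialWeight χ (L k) = radialWeight χ k := by
  simp only [radialWeight, LinearIsometryEquiv.norm_map,
    hχrad _ k (LinearIsometryEquiv.norm_map _ _)]

theorem fY_eq (χ : ℝ³ → ℝ) (y : ℝ) (k : ℝ³) :
    fY χ y k = radialWeight χ k * anisotropy k * cos (2 * k 0 * y) := by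
  rw [fY, radialWeight]
  ring

theorem integrable_fY (hχc : Continuous χ) (hχ : HasCompactSupport χ) : Integrable (fY χ y) := by
  simp only [funext (fY_eq χ y)]
  exact ((integrable_radialWeight hχc hχ).mul_bdd measurable_anisotropy.aestronglyMeasurable
    (.of_forall fun k => (Real.norm_eq_abs _).trans_le (abs_anisotropy_le k))).mul_bdd
    (by fun_prop) (.of_forall fun k => (Real.norm_eq_abs _).trans_le (abs_cos_le_one _))

theorem fY_reflectCoord_zero (hχrad : ∀ k k' : ℝ³, ‖k‖ = ‖k'‖ → χ k = χ k') (k : ℝ³) :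
    fY χ y (EuclideanSpace.reflectCoord 0 k) = fY χ y k := by
  simp only [fY_eq, radialWeight_map hχrad, anisotropy_reflectCoord_zero,
    EuclideanSpace.reflectCoord_apply_self, mul_neg, neg_mul, cos_neg]

theorem integrable_normSqLambdaY (hχc : Continuous χ) (hχ : HasCompactSupport χ)
    (hmeas : ∀ γ, Measurable (e γ)) (hpol : ∀ k, k ≠ 0 → IsPolarization k (e 0 k) (e 1 k))
    (γ : Fin 2) : Integrable (normSqLambdaY χ e y γ) := by
  have hγ := hmeas γ
  have hχ2 : HasCompactSupport fun k => 4 * χ k ^ 2 :=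
    hχ.comp_left (g := fun t : ℝ => 4 * t ^ 2) (by simp)
  refine ((hχc.pow 2).const_mul 4).integrable_div_mul_norm_of_hasCompactSupport (by simp) hχ2 _
    |>.mul_bdd (c := 1) (by fun_prop) ?_
  filter_upwards [Measure.ae_ne volume 0] with k hk
  simpa [(hpol k hk).norm_eq_one (e := fun γ => e γ k) γ] using abs_sq_mul_cos_sq_add_sq_mul_sin_sq_le (e γ k) (k 0 * y)

theorem sum_normSqLambdaY {k : ℝ³} (hk : k ≠ 0) (hpol : IsPolarization k (e 0 k) (e 1 k)) :
    ∑ γ, normSqLambdaY χ e y γ k = 4 * radialWeight χ k + 2 * fY χ y k := by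
  rw [Fin.sum_univ_two, normSqLambdaY, normSqLambdaY, ← mul_add,
    hpol.sq_mul_cos_sq_add_sq_mul_sin_sq hk, fY_eq, radialWeight, ← mul_assoc 2 (k 0) y]
  ring

theorem sum_setIntegral_normSqLambdaY (hχc : Continuous χ) (hχ : HasCompactSupport χ)
    (hmeas : ∀ γ, Measurable (e γ)) (hpol : ∀ k, k ≠ 0 → IsPolarization k (e 0 k) (e 1 k)) :
    ∑ γ, ∫ k in {k : ℝ³ | 0 < k 0}, normSqLambdaY χ e y γ k =
      4 * (∫ k in {k : ℝ³ | 0 < k 0}, radialWeight χ k) +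
        2 * ∫ k in {k : ℝ³ | 0 < k 0}, fY χ y k := by
  rw [← integral_finsetSum _ fun γ _ => (integrable_normSqLambdaY hχc hχ hmeas hpol γ).integrableOn,
    ← integral_const_mul, ← integral_const_mul,
    ← integral_add ((integrable_radialWeight hχc hχ).integrableOn.const_mul 4)
      ((integrable_fY hχc hχ).integrableOn.const_mul 2)]
  refine setIntegral_congr_fun (measurableSet_lt measurable_const (by fun_prop)) fun k hk => ?_
  have hk0 : k ≠ 0 := by rintro rfl; simp at hk
  exact sum_normSqLambdaY hk0 (hpol k hk0)

theorem integral_normSqLambdaInf (hpol : ∀ k, k ≠ 0 → IsPolarization k (e 0 k) (e 1 k))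
    (γ : Fin 2) : ∫ k, normSqLambdaInf χ e γ k = ∫ k, radialWeight χ k := by
  refine integral_congr_ae ?_
  filter_upwards [Measure.ae_ne volume 0] with k hk
  simp [normSqLambdaInf, (hpol k hk).norm_eq_one (e := fun γ => e γ k) γ]

end Densities

theorem lambda_norm_difference_general (Λ y : ℝ)
    (χ : EuclideanSpace ℝ (Fin 3) → ℝ) (hχc : Continuous χ)
    (hχsupp : ∀ k, Λ < ‖k‖ → χ k = 0)
    (hχrad : ∀ k k' : EuclideanSpace ℝ (Fin 3), ‖k‖ = ‖k'‖ → χ k = χ k')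
    (e : Fin 2 → EuclideanSpace ℝ (Fin 3) → EuclideanSpace ℝ (Fin 3))
    (hmeas : ∀ γ, Measurable (e γ))
    (honb : ∀ k : EuclideanSpace ℝ (Fin 3), k ≠ 0 →
      ‖e 0 k‖ = 1 ∧ ‖e 1 k‖ = 1 ∧ inner ℝ (e 0 k) (e 1 k) = (0 : ℝ) ∧
      inner ℝ k (e 0 k) = (0 : ℝ) ∧ inner ℝ k (e 1 k) = (0 : ℝ)) :
    (∑ γ : Fin 2, ∫ k in {k : EuclideanSpace ℝ (Fin 3) | 0 < k 0},
        (4 * (χ k) ^ 2 / (2 * π ^ 2 * ‖k‖)) *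
          ((e γ k 0) ^ 2 * (Real.cos (k 0 * y)) ^ 2
            + ((e γ k 1) ^ 2 + (e γ k 2) ^ 2) * (Real.sin (k 0 * y)) ^ 2))
      - (∑ γ : Fin 2, ∫ k : EuclideanSpace ℝ (Fin 3),
          ((χ k) ^ 2 / (2 * π ^ 2 * ‖k‖)) * ‖e γ k‖ ^ 2)
      = ∫ k : EuclideanSpace ℝ (Fin 3),
          (1 / (2 * π ^ 2)) * ((χ k) ^ 2 / ‖k‖) *
            (-1 - (k 0 / ‖k‖) ^ 2 + (k 1 / ‖k‖) ^ 2 + (k 2 / ‖k‖) ^ 2) *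
            Real.cos (2 * k 0 * y) := by
  have hχ : HasCompactSupport χ := HasCompactSupport.intro (isCompact_closedBall 0 Λ)
    fun k hk => hχsupp k (by simpa using hk)
  change (∑ γ, ∫ k in {k : ℝ³ | 0 < k 0}, normSqLambdaY χ e y γ k) -
    ∑ γ, ∫ k, normSqLambdaInf χ e γ k = ∫ k, fY χ y k
  simp only [sum_setIntegral_normSqLambdaY hχc hχ hmeas honb, integral_normSqLambdaInf honb,
    Finset.sum_const, Finset.card_univ, Fintype.card_fin, nsmul_eq_mul,
    EuclideanSpace.integral_eq_two_mul_setIntegral_apply_pos (integrable_radialWeight hχc hχ) 0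
      (radialWeight_map hχrad _),
    EuclideanSpace.integral_eq_two_mul_setIntegral_apply_pos (integrable_fY hχc hχ) 0
      (fY_reflectCoord_zero hχrad)]
  ring

/-- `‖λ_y‖² − ‖λ_∞‖² = ∫_{ℝ³} f_y(k) dk`, where
`f_y(k) = (1/(2π²))(χ_Λ(k)²/|k|)(−1 − k̂₁² + k̂₂² + k̂₃²) cos(2k₁y)`. The norms are written
out explicitly: `‖λ_y‖²` is an integral over the half-space `{k₁ > 0}` and `‖λ_∞‖²` over
`ℝ³`, with `(e₁(k), e₂(k))` polarization vectors making `(k̂, e₁(k), e₂(k))` orthonormal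
and `χ` a radial cutoff supported in `{|k| ≤ Λ}`. -/
theorem lambda_norm_difference (Λ y : ℝ) (hΛ : 0 < Λ) (hy : 0 < y)
    (χ : EuclideanSpace ℝ (Fin 3) → ℝ) (hχc : Continuous χ)
    (hχsupp : ∀ k, Λ < ‖k‖ → χ k = 0)
    (hχrad : ∀ k k' : EuclideanSpace ℝ (Fin 3), ‖k‖ = ‖k'‖ → χ k = χ k')
    (e : Fin 2 → EuclideanSpace ℝ (Fin 3) → EuclideanSpace ℝ (Fin 3))
    (hmeas : ∀ γ, Measurable (e γ))
    (honb : ∀ k : EuclideanSpace ℝ (Fin 3), k ≠ 0 →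
      ‖e 0 k‖ = 1 ∧ ‖e 1 k‖ = 1 ∧ inner ℝ (e 0 k) (e 1 k) = (0 : ℝ) ∧
      inner ℝ k (e 0 k) = (0 : ℝ) ∧ inner ℝ k (e 1 k) = (0 : ℝ)) :
    (∑ γ : Fin 2, ∫ k in {k : EuclideanSpace ℝ (Fin 3) | 0 < k 0},
        (4 * (χ k) ^ 2 / (2 * π ^ 2 * ‖k‖)) *
          ((e γ k 0) ^ 2 * (Real.cos (k 0 * y)) ^ 2
            + ((e γ k 1) ^ 2 + (e γ k 2) ^ 2) * (Real.sin (k 0 * y)) ^ 2))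
      - (∑ γ : Fin 2, ∫ k : EuclideanSpace ℝ (Fin 3),
          ((χ k) ^ 2 / (2 * π ^ 2 * ‖k‖)) * ‖e γ k‖ ^ 2)
      = ∫ k : EuclideanSpace ℝ (Fin 3),
          (1 / (2 * π ^ 2)) * ((χ k) ^ 2 / ‖k‖) *
            (-1 - (k 0 / ‖k‖) ^ 2 + (k 1 / ‖k‖) ^ 2 + (k 2 / ‖k‖) ^ 2) *
            Real.cos (2 * k 0 * y) :=
  lambda_norm_difference_general Λ y χ hχc hχsupp hχrad e hmeas honb
end
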